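/- (Theorem 3, conditional form.) Let g and Z be independent random variables on a probability space, where g is exponentially distributed with rate 1 and Z has the Erlang (Gamma) distribution with integer shape k ≥ 1 and rate 1. Let η, ξ, τ, P_t, E_th, β, α be positive reals and let d₁ > 0. Set T = E_th/(η ξ τ P_t) and c = T d₁^{α}/(1 + β). Then ℙ( g > d₁^{α}(T − d₁^{−α} Z) and g > β Z ) = ∫₀^c (z^{k−1}/(k−1)!) · exp(−T d₁^{α}) dz + ∫_c^∞ (z^{k−1}/(k−1)!) · exp(−(β + 1) z) dz. -/

import Mathlib

open MeasureTheory ProbabilityTheory Real Set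

lemma expMeasure_Ioi' {t : ℝ} (ht : 0 ≤ t) :
    expMeasure 1 (Set.Ioi t) = ENNReal.ofReal (Real.exp (-t)) := by
  haveI : IsProbabilityMeasure (expMeasure 1) := isProbabilityMeasure_expMeasure one_pos
  have hle : Real.exp (-t) ≤ 1 := Real.exp_le_one_iff.mpr (neg_nonpos.mpr ht)
  have h1 : expMeasure 1 (Set.Iic t) = ENNReal.ofReal (1 - Real.exp (-t)) := by
    rw [← ofReal_cdf]
    have h := cdf_expMeasure_eq one_pos t
    rw [h, if_pos ht, one_mul]
  rw [← Set.compl_Iic, prob_compl_eq_one_sub measurableSet_Iic, h1,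
    ← ENNReal.ofReal_one, ← ENNReal.ofReal_sub _ (by linarith)]
  norm_num

/-- Theorem 3 of the paper, conditional form: lower bound of the joint success
probability conditional on `k` interferers in the saturation regime of the non-linear
energy-harvesting model, with `g ~ Exp(1)` and `Z ~ Erlang(k, 1)` independent. -/
theorem jsp_lower_bound_saturation_conditional {Ω : Type*} [MeasurableSpace Ω] (P : Measure Ω)
    [IsProbabilityMeasure P] (g Z : Ω → ℝ) (hg : Measurable g) (hZ : Measurable Z)
    (hInd : IndepFun g Z P)
    (hgLaw : P.map g = expMeasure 1)
    (k : ℕ) (hk : 1 ≤ k)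
    (hZLaw : P.map Z = gammaMeasure k 1)
    (η ξ τ Pt Eth β α d₁ : ℝ)
    (hη : 0 < η) (hξ : 0 < ξ) (hτ : 0 < τ) (hPt : 0 < Pt) (hEth : 0 < Eth)
    (hβ : 0 < β) (hα : 0 < α) (hd₁ : 0 < d₁)
    (T c : ℝ) (hT : T = Eth / (η * ξ * τ * Pt))
    (hc : c = T * d₁ ^ α / (1 + β)) :
    (P {ω | g ω > d₁ ^ α * (T - d₁ ^ (-α) * Z ω) ∧ g ω > β * Z ω}).toReal =
      (∫ z in (0:ℝ)..c, (z ^ (k - 1) / (Nat.factorial (k - 1))) *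
          Real.exp (-(T * d₁ ^ α))) +
      ∫ z in Set.Ioi c, (z ^ (k - 1) / (Nat.factorial (k - 1))) *
          Real.exp (-(β + 1) * z) := by
  haveI hγP : IsProbabilityMeasure (gammaMeasure k 1) :=
    isProbabilityMeasure_gammaMeasure (by exact_mod_cast Nat.lt_of_lt_of_le Nat.zero_lt_one hk) one_pos
  haveI : IsProbabilityMeasure (expMeasure 1) := isProbabilityMeasure_expMeasure one_pos
  have hd : (0:ℝ) < d₁ ^ α := Real.rpow_pos_of_pos hd₁ α
  have hT0 : 0 < T := by rw [hT]; positivity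
  set A : ℝ := T * d₁ ^ α with hA
  have hA0 : 0 < A := mul_pos hT0 hd
  have hc0 : 0 < c := by rw [hc]; positivity
  have hAc : A = c * (1 + β) := by rw [hc]; field_simp
  set S : Set (ℝ × ℝ) := {p : ℝ × ℝ | p.2 > A - p.1 ∧ p.2 > β * p.1} with hSdef
  have hS : MeasurableSet S := by
    rw [hSdef, Set.setOf_and]
    exact (measurableSet_lt (by fun_prop) measurable_snd).inter
      (measurableSet_lt (by fun_prop) measurable_snd)
  have hev : {ω | g ω > d₁ ^ α * (T - d₁ ^ (-α) * Z ω) ∧ g ω > β * Z ω}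
      = (fun ω => (Z ω, g ω)) ⁻¹' S := by
    ext ω
    have h1 : d₁ ^ α * d₁ ^ (-α) = 1 := by
      rw [← Real.rpow_add hd₁]; simp
    have h2 : d₁ ^ α * (T - d₁ ^ (-α) * Z ω) = A - Z ω := by
      have h3 : d₁ ^ α * (d₁ ^ (-α) * Z ω) = Z ω := by rw [← mul_assoc, h1, one_mul]
      rw [mul_sub, h3, hA]; ring
    simp only [Set.mem_setOf_eq, Set.mem_preimage, hSdef, h2]
  have hmap : P.map (fun ω => (Z ω, g ω)) = (gammaMeasure k 1).prod (expMeasure 1) := by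
    rw [← hZLaw, ← hgLaw]
    exact (indepFun_iff_map_prod_eq_prod_map_map hZ.aemeasurable hg.aemeasurable).mp hInd.symm
  have hPE : P ((fun ω => (Z ω, g ω)) ⁻¹' S)
      = ((gammaMeasure k 1).prod (expMeasure 1)) S := by
    rw [← hmap, Measure.map_apply (hZ.prodMk hg) hS]
  -- slices
  have hmax0 : ∀ z : ℝ, 0 ≤ max (A - z) (β * z) := by
    intro z
    rcases le_or_gt 0 z with h | h
    · exact le_max_of_le_right (mul_nonneg hβ.le h)
    · exact le_max_of_le_left (by nlinarith)
  have hslice : ∀ z : ℝ, (Prod.mk z ⁻¹' S) = Set.Ioi (max (A - z) (β * z)) := by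
    intro z; ext x
    simp [hSdef, Set.mem_Ioi, max_lt_iff]
  set G : ℝ → ENNReal := fun z => ENNReal.ofReal (Real.exp (-(max (A - z) (β * z)))) with hGdef
  have hGm : Measurable G := by
    apply Measurable.ennreal_ofReal; fun_prop
  have hprod : ((gammaMeasure k 1).prod (expMeasure 1)) S
      = ∫⁻ z, gammaPDF k 1 z * G z := by
    rw [Measure.prod_apply hS]
    have : ∀ z : ℝ, expMeasure 1 (Prod.mk z ⁻¹' S) = G z := by
      intro z; rw [hslice z, expMeasure_Ioi' (hmax0 z)]
    simp_rw [this]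
    have hm : Measurable (gammaPDF (k:ℝ) 1) := (measurable_gammaPDFReal _ _).ennreal_ofReal
    rw [show gammaMeasure (k:ℝ) 1 = volume.withDensity (gammaPDF k 1) from rfl,
      lintegral_withDensity_eq_lintegral_mul _ hm hGm]
    rfl
  -- finiteness
  have htot : ∫⁻ z, gammaPDF k 1 z * G z ≤ 1 := by
    calc ∫⁻ z, gammaPDF k 1 z * G z ≤ ∫⁻ z, gammaPDF k 1 z * 1 := by
          refine lintegral_mono fun z => mul_le_mul_right ?_ _
          rw [hGdef, ← ENNReal.ofReal_one]
          exact ENNReal.ofReal_le_ofReal (Real.exp_le_one_iff.mpr (neg_nonpos.mpr (hmax0 z)))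
      _ = 1 := by
          simp only [mul_one]
          exact lintegral_gammaPDF_eq_one (by exact_mod_cast Nat.lt_of_lt_of_le Nat.zero_lt_one hk)
            one_pos
  -- split
  have hsplit : ∫⁻ z, gammaPDF k 1 z * G z
      = (∫⁻ z in Set.Icc 0 c, gammaPDF k 1 z * G z) + ∫⁻ z in Set.Ioi c, gammaPDF k 1 z * G z := by
    have h0 : ∫⁻ z in Set.Iio 0, gammaPDF k 1 z * G z = 0 := by
      rw [setLIntegral_congr_fun measurableSet_Iio
        (fun z (hz : z < 0) => by rw [gammaPDF_of_neg hz, zero_mul]), lintegral_zero]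
    have hcompl := lintegral_add_compl (μ := volume) (fun z => gammaPDF k 1 z * G z) (measurableSet_Ici (a := (0:ℝ)))
    rw [Set.compl_Ici, h0, add_zero] at hcompl
    rw [← hcompl, ← Set.Icc_union_Ioi_eq_Ici hc0.le,
      lintegral_union measurableSet_Ioi (by rw [Set.disjoint_left]; intro z hz hz'; exact absurd hz.2 (not_le.mpr hz'))]
  -- Gamma factorial
  have hΓ : Real.Gamma (k:ℝ) = (Nat.factorial (k-1) : ℝ) := by
    rw [show (k:ℝ) = ((k-1 : ℕ) : ℝ) + 1 by rw [Nat.cast_sub hk]; push_cast; ring,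
      Real.Gamma_nat_eq_factorial]
  have hpdf : ∀ z : ℝ, 0 ≤ z → gammaPDF (k:ℝ) 1 z
      = ENNReal.ofReal (z ^ (k-1) / (Nat.factorial (k-1)) * Real.exp (-z)) := by
    intro z hz
    rw [gammaPDF_of_nonneg hz, Real.one_rpow, hΓ,
      show ((k:ℝ) - 1) = ((k-1:ℕ) : ℝ) by rw [Nat.cast_sub hk]; push_cast; ring,
      Real.rpow_natCast]
    congr 1
    ring
  -- piece 1
  have h1 : ∫⁻ z in Set.Icc 0 c, gammaPDF k 1 z * G z
      = ∫⁻ z in Set.Icc 0 c,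
          ENNReal.ofReal (z ^ (k-1) / (Nat.factorial (k-1)) * Real.exp (-A)) := by
    refine setLIntegral_congr_fun measurableSet_Icc (fun z hz => ?_)
    obtain ⟨hz0, hzc⟩ := hz
    have hmax : max (A - z) (β * z) = A - z := max_eq_left (by nlinarith)
    rw [hpdf z hz0, hGdef]
    simp only
    rw [hmax, ← ENNReal.ofReal_mul (by positivity)]
    congr 1
    rw [mul_assoc, ← Real.exp_add, show -z + -(A - z) = -A by ring]
  -- piece 2
  have h2 : ∫⁻ z in Set.Ioi c, gammaPDF k 1 z * G z
      = ∫⁻ z in Set.Ioi c,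
          ENNReal.ofReal (z ^ (k-1) / (Nat.factorial (k-1)) * Real.exp (-(β+1) * z)) := by
    refine setLIntegral_congr_fun measurableSet_Ioi (fun z hz => ?_)
    have hz0 : 0 ≤ z := le_of_lt (lt_of_le_of_lt hc0.le hz)
    have hmax : max (A - z) (β * z) = β * z := max_eq_right (by nlinarith [Set.mem_Ioi.mp hz])
    rw [hpdf z hz0, hGdef]
    simp only
    rw [hmax, ← ENNReal.ofReal_mul (by positivity)]
    congr 1
    rw [mul_assoc, ← Real.exp_add]
    congr 1
    ring
  -- Bochner conversions
  have h1' : (∫⁻ z in Set.Icc 0 c,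
        ENNReal.ofReal (z ^ (k-1) / (Nat.factorial (k-1)) * Real.exp (-A))).toReal
      = ∫ z in (0:ℝ)..c, z ^ (k - 1) / (Nat.factorial (k - 1)) * Real.exp (-A) := by
    rw [intervalIntegral.integral_of_le hc0.le, ← restrict_Ioc_eq_restrict_Icc,
      integral_eq_lintegral_of_nonneg_ae
        (ae_restrict_of_forall_mem measurableSet_Ioc fun z hz => by
          have := hz.1.le; positivity)
        ((by fun_prop : Measurable fun z : ℝ =>
          z ^ (k - 1) / (Nat.factorial (k - 1)) * Real.exp (-A)).aestronglyMeasurable)]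
  have h2' : (∫⁻ z in Set.Ioi c,
        ENNReal.ofReal (z ^ (k-1) / (Nat.factorial (k-1)) * Real.exp (-(β+1) * z))).toReal
      = ∫ z in Set.Ioi c, z ^ (k - 1) / (Nat.factorial (k - 1)) * Real.exp (-(β+1) * z) := by
    rw [integral_eq_lintegral_of_nonneg_ae
        (ae_restrict_of_forall_mem measurableSet_Ioi fun z hz => by
          have : (0:ℝ) ≤ z := le_of_lt (lt_of_le_of_lt hc0.le hz); positivity)
        ((by fun_prop : Measurable fun z : ℝ =>
          z ^ (k - 1) / (Nat.factorial (k - 1)) * Real.exp (-(β+1) * z)).aestronglyMeasurable)]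
  have hfin1 : (∫⁻ z in Set.Icc 0 c, gammaPDF k 1 z * G z) ≠ ⊤ := by
    refine ne_top_of_le_ne_top (by simp) (le_trans ?_ htot)
    exact setLIntegral_le_lintegral _ _
  have hfin2 : (∫⁻ z in Set.Ioi c, gammaPDF k 1 z * G z) ≠ ⊤ := by
    refine ne_top_of_le_ne_top (by simp) (le_trans ?_ htot)
    exact setLIntegral_le_lintegral _ _
  rw [hev, hPE, hprod, hsplit, ENNReal.toReal_add hfin1 hfin2, h1 , h2, h1', h2']
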